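/- For every nilpotent n×n matrix A over a field k and every integer m ≥ 0, one has (-1)^m·(∂_{ji} s_{m+1})(A)_{ij} = A^m = (∂_{ji} h_{m+1})(A)_{ij}, where the subscript ij indicates the matrix formed from these partial derivatives. -/

import Mathlib

open MvPolynomial

/-- The generic `n × n` matrix whose `(i,j)` entry is the coordinate function `x_{ij}`. -/
noncomputable def genMat (k : Type*) [CommRing k] (n : ℕ) :
    Matrix (Fin n) (Fin n) (MvPolynomial (Fin n × Fin n) k) :=
  Matrix.of fun i j => X (i, j)

/-- `s_m`, the `m`-th elementary symmetric function of the eigenvalues, as a polynomial in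
the matrix entries. -/
noncomputable def sPoly (k : Type*) [CommRing k] (n : ℕ) (m : ℕ) :
    MvPolynomial (Fin n × Fin n) k :=
  if m ≤ n then (-1) ^ m * (genMat k n).charpoly.coeff (n - m) else 0

/-- `h_m = tr(S^m)`, the `m`-th complete homogeneous symmetric function of the eigenvalues,
as a polynomial in the matrix entries; it is determined by `h_0 = 1` and the universal
identity `∑_{k=0}^m (-1)^k s_k h_{m-k} = 0` (for `m ≥ 1`). -/
noncomputable def hPoly (k : Type*) [CommRing k] (n : ℕ) : ℕ → MvPolynomial (Fin n × Fin n) k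
  | 0 => 1
  | (m + 1) => ∑ j ∈ Finset.range (m + 1), (-1) ^ j * sPoly k n (j + 1) * hPoly k n (m - j)
  termination_by m => m
  decreasing_by omega

/-!
Jacobi's formula `d (det N) = ∑ adj(N)_{cr} d(N_{rc})`, applied coefficientwise to
`det (X - M)`, expresses `∂_{ji}` of the coefficients of the characteristic polynomial through
the coefficients of `adj (X - M)`. For nilpotent `A` the characteristic polynomial is `X ^ n`, and
then `adj (X - A) = ∑_{a < n} A ^ (n - 1 - a) X ^ a` is the geometric sum
`(X ^ n - A ^ n) / (X - A)`; this gives the `s`-part. All `s_r` and `h_r` with `r ≥ 1` vanish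
at `A`, so in the recursion for `h_{m+1}` only the term `(-1) ^ m (∂ s_{m+1}) h_0` survives at `A`.
-/

open scoped Polynomial

namespace Derivation

section Semiring

variable {R A M : Type*} [CommSemiring R] [CommSemiring A] [Algebra R A] [AddCommMonoid M]
  [Module A M] [Module R M]

theorem leibniz_prod {ι : Type*} [DecidableEq ι] (d : Derivation R A M) (s : Finset ι)
    (f : ι → A) : d (∏ i ∈ s, f i) = ∑ i ∈ s, (∏ j ∈ s.erase i, f j) • d (f i) := by
  induction s using Finset.induction_on with
  | empty => simp
  | insert a s ha ih =>
    rw [Finset.prod_insert ha, leibniz, ih, Finset.sum_insert ha, Finset.erase_insert ha,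
      Finset.smul_sum, add_comm]
    congr 1
    refine Finset.sum_congr rfl fun i hi => ?_
    rw [Finset.erase_insert_of_ne (ne_of_mem_of_not_mem hi ha).symm,
      Finset.prod_insert (fun h => ha (Finset.mem_of_mem_erase h)), smul_smul]

end Semiring

variable {R A : Type*} [CommRing R] [CommRing A] [Algebra R A] {n : Type*} [Fintype n]
  [DecidableEq n]

theorem apply_det (d : Derivation R A A) (N : Matrix n n A) :
    d N.det = ∑ c, ∑ r, N.adjugate c r * d (N r c) := by
  have cramer_col (c : n) :
      ∑ r, N.adjugate c r * d (N r c) = (N.updateCol c fun r => d (N r c)).det := by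
    rw [← Matrix.cramer_apply, Matrix.cramer_eq_adjugate_mulVec]
    rfl
  simp_rw [cramer_col, Matrix.det_apply, map_sum, map_zsmul_unit, leibniz_prod,
    Finset.smul_sum]
  rw [Finset.sum_comm]
  refine Finset.sum_congr rfl fun c _ => Finset.sum_congr rfl fun σ _ => ?_
  rw [← Finset.mul_prod_erase _ _ (Finset.mem_univ c), Matrix.updateCol_self, smul_eq_mul,
    mul_comm]
  congr 2
  refine Finset.prod_congr rfl fun i hi => ?_
  rw [Matrix.updateCol_ne (Finset.ne_of_mem_erase hi)]

noncomputable def mapCoeffsSelf (d : Derivation R A A) : Derivation R A[X] A[X] :=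
  PolynomialModule.equivPolynomialSelf.compDer d.mapCoeffs

@[simp]
theorem coeff_mapCoeffsSelf (d : Derivation R A A) (p : A[X]) (t : ℕ) :
    (d.mapCoeffsSelf p).coeff t = d (p.coeff t) := rfl

theorem mapCoeffsSelf_charmatrix (d : Derivation R A A) (N : Matrix n n A) (r c : n) :
    d.mapCoeffsSelf (N.charmatrix r c) = -Polynomial.C (d (N r c)) := by
  ext t
  by_cases h : r = c <;>
    simp [Polynomial.coeff_X, Polynomial.coeff_C, h, apply_ite d]

theorem apply_charpoly_coeff (d : Derivation R A A) (N : Matrix n n A) (t : ℕ) :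
    d (N.charpoly.coeff t) = -∑ c, ∑ r, (N.charmatrix.adjugate c r).coeff t * d (N r c) := by
  rw [← coeff_mapCoeffsSelf, Matrix.charpoly, apply_det]
  simp [mapCoeffsSelf_charmatrix]

end Derivation

namespace Matrix

variable {S : Type*} [CommRing S] {n : Type*} [Fintype n] [DecidableEq n]

theorem charpoly_eq_X_pow_of_isNilpotent [IsReduced S] {M : Matrix n n S} (hM : IsNilpotent M) :
    M.charpoly = Polynomial.X ^ Fintype.card n := by
  rw [← sub_eq_zero]
  ext i
  exact (Polynomial.isNilpotent_iff.mp (isNilpotent_charpoly_sub_pow_of_isNilpotent hM) i).eq_zero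

theorem pow_card_eq_zero_of_charpoly_eq_X_pow {M : Matrix n n S}
    (hM : M.charpoly = Polynomial.X ^ Fintype.card n) : M ^ Fintype.card n = 0 := by
  simpa [hM] using M.aeval_self_charpoly

theorem matPolyEquiv_adjugate_charmatrix_of_charpoly_eq_X_pow {M : Matrix n n S}
    (hM : M.charpoly = Polynomial.X ^ Fintype.card n) :
    matPolyEquiv M.charmatrix.adjugate = ∑ i ∈ Finset.range (Fintype.card n),
      Polynomial.C (M ^ (Fintype.card n - 1 - i)) * Polynomial.X ^ i := by
  have adj_mul : matPolyEquiv M.charmatrix.adjugate * (Polynomial.X - Polynomial.C M) =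
      Polynomial.X ^ Fintype.card n := by
    rw [← matPolyEquiv_charmatrix, ← map_mul, adjugate_mul, ← charpoly, hM,
      matPolyEquiv_smul_one, Polynomial.map_pow, Polynomial.map_X]
  have geom_mul : (∑ i ∈ Finset.range (Fintype.card n),
      Polynomial.C (M ^ (Fintype.card n - 1 - i)) * Polynomial.X ^ i) *
        (Polynomial.X - Polynomial.C M) = Polynomial.X ^ Fintype.card n := by
    have := (Polynomial.commute_X (Polynomial.C M)).geom_sum₂_mul (Fintype.card n)
    simp_rw [← Polynomial.C_pow, Polynomial.X_pow_mul, pow_card_eq_zero_of_charpoly_eq_X_pow hM,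
      map_zero, sub_zero] at this
    exact this
  exact (Polynomial.monic_X_sub_C M).isRegular.right (adj_mul.trans geom_mul.symm)

theorem adjugate_charmatrix_coeff_of_charpoly_eq_X_pow {M : Matrix n n S}
    (hM : M.charpoly = Polynomial.X ^ Fintype.card n) {m : ℕ} (hm : m < Fintype.card n)
    (i j : n) : (M.charmatrix.adjugate i j).coeff (Fintype.card n - 1 - m) = (M ^ m) i j := by
  rw [← matPolyEquiv_coeff_apply, matPolyEquiv_adjugate_charmatrix_of_charpoly_eq_X_pow hM]
  simp only [Polynomial.finsetSum_coeff, Polynomial.coeff_C_mul_X_pow, Finset.sum_ite_eq,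
    Finset.mem_range]
  rw [if_pos (by omega), Nat.sub_sub_self (by omega)]

end Matrix

section GenericMatrix

variable {k : Type*} [CommRing k] {n : ℕ}

theorem pderiv_charpoly_coeff_genMat (t : ℕ) (i j : Fin n) :
    pderiv (j, i) ((genMat k n).charpoly.coeff t) =
      -((genMat k n).charmatrix.adjugate i j).coeff t := by
  rw [Derivation.apply_charpoly_coeff]
  simp [genMat, pderiv_X, Pi.single_apply, Prod.ext_iff, ite_and]

theorem genMat_map_eval (A : Matrix (Fin n) (Fin n) k) :
    (genMat k n).map (eval fun p => A p.1 p.2) = A := by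
  ext i j
  simp [genMat]

theorem eval_charpoly_coeff_genMat (A : Matrix (Fin n) (Fin n) k) (t : ℕ) :
    eval (fun p => A p.1 p.2) ((genMat k n).charpoly.coeff t) = A.charpoly.coeff t := by
  rw [← Polynomial.coeff_map, ← Matrix.charpoly_map, genMat_map_eval]

theorem eval_adjugate_charmatrix_genMat_coeff (A : Matrix (Fin n) (Fin n) k) (t : ℕ)
    (i j : Fin n) : eval (fun p => A p.1 p.2) (((genMat k n).charmatrix.adjugate i j).coeff t) =
      (A.charmatrix.adjugate i j).coeff t := by
  have map_adjugate := RingHom.map_adjugate (Polynomial.mapRingHom (eval fun p => A p.1 p.2))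
    (genMat k n).charmatrix
  rw [RingHom.mapMatrix_apply, RingHom.mapMatrix_apply, Polynomial.coe_mapRingHom,
    ← Matrix.charmatrix_map, genMat_map_eval] at map_adjugate
  rw [← map_adjugate]
  simp [Polynomial.coeff_map]

end GenericMatrix

section CharpolyEqXPow

variable {k : Type*} [CommRing k] {n : ℕ} {A : Matrix (Fin n) (Fin n) k}

theorem eval_sPoly_succ_of_charpoly_eq_X_pow
    (hA : A.charpoly = Polynomial.X ^ Fintype.card (Fin n)) (r : ℕ) :
    eval (fun p => A p.1 p.2) (sPoly k n (r + 1)) = 0 := by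
  rw [sPoly]
  split_ifs
  · rw [map_mul, eval_charpoly_coeff_genMat, hA, Polynomial.coeff_X_pow, Fintype.card_fin,
      if_neg (by omega), mul_zero]
  · exact map_zero _

theorem eval_hPoly_succ_of_charpoly_eq_X_pow
    (hA : A.charpoly = Polynomial.X ^ Fintype.card (Fin n)) (r : ℕ) :
    eval (fun p => A p.1 p.2) (hPoly k n (r + 1)) = 0 := by
  rw [hPoly, map_sum]
  exact Finset.sum_eq_zero fun a _ => by
    rw [map_mul, map_mul, eval_sPoly_succ_of_charpoly_eq_X_pow hA, mul_zero, zero_mul]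

theorem eval_pderiv_sPoly_succ_of_charpoly_eq_X_pow
    (hA : A.charpoly = Polynomial.X ^ Fintype.card (Fin n)) (m : ℕ) (i j : Fin n) :
    eval (fun p => A p.1 p.2) (pderiv (j, i) (sPoly k n (m + 1))) = (-1) ^ m * (A ^ m) i j := by
  rw [sPoly]
  split_ifs with hm
  · have coeff_eq := A.adjugate_charmatrix_coeff_of_charpoly_eq_X_pow hA (m := m)
      (by rw [Fintype.card_fin]; omega) i j
    rw [Fintype.card_fin, show n - 1 - m = n - (m + 1) by omega] at coeff_eq
    simp [Derivation.leibniz, pderiv_charpoly_coeff_genMat, eval_adjugate_charmatrix_genMat_coeff,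
      coeff_eq, pow_succ]
  · have hAm : A ^ m = 0 :=
      pow_eq_zero_of_le (by simp; omega) (Matrix.pow_card_eq_zero_of_charpoly_eq_X_pow hA)
    simp [hAm]

theorem eval_pderiv_hPoly_succ_of_charpoly_eq_X_pow
    (hA : A.charpoly = Polynomial.X ^ Fintype.card (Fin n)) (m : ℕ) (i j : Fin n) :
    eval (fun p => A p.1 p.2) (pderiv (j, i) (hPoly k n (m + 1))) = (A ^ m) i j := by
  rw [hPoly, map_sum, map_sum, Finset.sum_eq_single_of_mem m (Finset.self_mem_range_succ m)]
  · rw [Nat.sub_self, hPoly, mul_one]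
    simp [Derivation.leibniz, eval_pderiv_sPoly_succ_of_charpoly_eq_X_pow hA, ← mul_assoc,
      ← mul_pow]
  · intro a ha hne
    obtain ⟨r, hr⟩ : ∃ r, m - a = r + 1 := ⟨m - a - 1, by simp at ha; omega⟩
    simp [hr, Derivation.leibniz, eval_sPoly_succ_of_charpoly_eq_X_pow hA,
      eval_hPoly_succ_of_charpoly_eq_X_pow hA]

end CharpolyEqXPow

/-- For a nilpotent matrix `A`,
`(-1)^m (∂_{ji} s_{m+1})(A)_{ij} = A^m = (∂_{ji} h_{m+1})(A)_{ij}`. -/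
theorem pderiv_sPoly_hPoly_nilpotent {k : Type*} [Field k] (n m : ℕ)
    (A : Matrix (Fin n) (Fin n) k) (hA : IsNilpotent A) :
    ((-1 : k) ^ m) • (Matrix.of fun i j =>
        eval (fun p : Fin n × Fin n => A p.1 p.2) (pderiv (j, i) (sPoly k n (m + 1)))) = A ^ m ∧
    (Matrix.of fun i j =>
        eval (fun p : Fin n × Fin n => A p.1 p.2) (pderiv (j, i) (hPoly k n (m + 1)))) = A ^ m := by
  have hcharpoly := Matrix.charpoly_eq_X_pow_of_isNilpotent hA
  constructor <;> ext i j
  · simp [eval_pderiv_sPoly_succ_of_charpoly_eq_X_pow hcharpoly, ← mul_assoc, ← mul_pow]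
  · simp [eval_pderiv_hPoly_succ_of_charpoly_eq_X_pow hcharpoly]
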